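/- Let C = (c_{j−i})_{i,j=0}^{n} be an arbitrary (not necessarily Hermitian) Toeplitz matrix with associated Fourier polynomial f(λ) = Σ_{k=−n}^{n} c_k e^{ikλ}. Then the spectral radius of C is at most 2 · sup_λ |f(λ)|. -/

import Mathlib

/-!
Every eigenvalue `μ` of `C` is a value `v* C v / ‖v‖²` of its quadratic form. Writing
`P_v(θ) = ∑ⱼ vⱼ e^{-ijθ}`, orthogonality of the exponentials on `[0, 2π]` gives
`2π · v* C v = ∫ f |P_v|²` and `2π · ‖v‖² = ∫ |P_v|²` (Parseval), so
`|μ| ≤ sup |f|`, which is stronger than the bound `2 · sup |f|` on the spectral radius.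
-/

open Complex Finset Matrix ComplexConjugate
open scoped Real ComplexOrder

noncomputable def trigPoly (s : Finset ℤ) (c : ℤ → ℂ) (θ : ℝ) : ℂ :=
  ∑ k ∈ s, c k * exp (k * θ * I)

/-- The frequencies are negated so that `∫ trigPoly c · |trigPolyOfVec v|²` pairs `c (j - i)`
with `conj (v i) * v j`, i.e. produces `v* C v` rather than `v* Cᵀ v`. -/
noncomputable def trigPolyOfVec {m : ℕ} (v : Fin m → ℂ) (θ : ℝ) : ℂ :=
  ∑ j, v j * exp (-((j : ℕ) : ℂ) * θ * I)

theorem norm_exp_int_mul_I (k : ℤ) (θ : ℝ) : ‖exp (k * θ * I)‖ = 1 := by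
  simpa using norm_exp_ofReal_mul_I (k * θ)

theorem integral_exp_int_mul_I (m : ℤ) :
    ∫ θ in (0 : ℝ)..2 * π, exp (m * θ * I) = if m = 0 then (2 * π : ℂ) else 0 := by
  split_ifs with hm
  · simp [hm]
  · have hmI : (m : ℂ) * I ≠ 0 := mul_ne_zero (by exact_mod_cast hm) I_ne_zero
    simp_rw [mul_right_comm _ _ I]
    rw [integral_exp_mul_complex hmI, ofReal_zero, mul_zero, exp_zero,
      show (m : ℂ) * I * ((2 * π : ℝ) : ℂ) = m * (2 * π * I) by push_cast; ring,
      exp_int_mul_two_pi_mul_I, sub_self, zero_div]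

theorem norm_trigPoly_le (s : Finset ℤ) (c : ℤ → ℂ) (θ : ℝ) :
    ‖trigPoly s c θ‖ ≤ ∑ k ∈ s, ‖c k‖ :=
  (norm_sum_le _ _).trans_eq <| sum_congr rfl fun k _ => by
    rw [norm_mul, norm_exp_int_mul_I, mul_one]

@[fun_prop]
theorem continuous_trigPoly (s : Finset ℤ) (c : ℤ → ℂ) : Continuous (trigPoly s c) := by
  unfold trigPoly; fun_prop

@[fun_prop]
theorem continuous_trigPolyOfVec {m : ℕ} (v : Fin m → ℂ) : Continuous (trigPolyOfVec v) := by
  unfold trigPolyOfVec; fun_prop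

theorem norm_trigPolyOfVec_sq {m : ℕ} (v : Fin m → ℂ) (θ : ℝ) :
    (‖trigPolyOfVec v θ‖ ^ 2 : ℂ) =
      ∑ i, ∑ j, conj (v i) * v j * exp ((((i : ℕ) : ℤ) - ((j : ℕ) : ℤ) : ℤ) * θ * I) := by
  rw [← conj_mul', trigPolyOfVec, map_sum, sum_mul_sum]
  refine sum_congr rfl fun i _ => sum_congr rfl fun j _ => ?_
  rw [map_mul, ← exp_conj, mul_mul_mul_comm, ← exp_add]
  congr 2
  simp only [map_mul, map_neg, conj_I, conj_ofReal, map_natCast]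
  push_cast
  ring

theorem integral_exp_mul_norm_trigPolyOfVec_sq {m : ℕ} (v : Fin m → ℂ) (k : ℤ) :
    ∫ θ in (0 : ℝ)..2 * π, exp (k * θ * I) * ‖trigPolyOfVec v θ‖ ^ 2 =
      2 * π * ∑ i : Fin m, ∑ j : Fin m,
        if ((j : ℕ) : ℤ) - ((i : ℕ) : ℤ) = k then conj (v i) * v j else 0 := by
  have hterm : ∀ i j : Fin m, ∫ θ in (0 : ℝ)..2 * π,
      exp (k * θ * I) * (conj (v i) * v j * exp ((((i : ℕ) : ℤ) - ((j : ℕ) : ℤ) : ℤ) * θ * I)) =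
        2 * π * if ((j : ℕ) : ℤ) - ((i : ℕ) : ℤ) = k then conj (v i) * v j else 0 := by
    intro i j
    simp_rw [mul_left_comm (exp _), ← exp_add, ← add_mul,
      show ∀ a b : ℤ, (a : ℂ) + (b : ℂ) = ((a + b : ℤ) : ℂ) from fun _ _ => by push_cast; rfl]
    rw [intervalIntegral.integral_const_mul, integral_exp_int_mul_I]
    split_ifs <;> first | omega | ring
  simp_rw [norm_trigPolyOfVec_sq, mul_sum]
  rw [intervalIntegral.integral_finsetSum fun i _ => by
    apply Continuous.intervalIntegrable; fun_prop]
  refine sum_congr rfl fun i _ => ?_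
  rw [intervalIntegral.integral_finsetSum fun j _ => by
    apply Continuous.intervalIntegrable; fun_prop]
  exact sum_congr rfl fun j _ => hterm i j

theorem integral_norm_trigPolyOfVec_sq {m : ℕ} (v : Fin m → ℂ) :
    ∫ θ in (0 : ℝ)..2 * π, ‖trigPolyOfVec v θ‖ ^ 2 = 2 * π * ∑ i, ‖v i‖ ^ 2 := by
  have h := integral_exp_mul_norm_trigPolyOfVec_sq v 0
  simp only [Int.cast_zero, zero_mul, Complex.exp_zero, one_mul, sub_eq_zero, Nat.cast_inj,
    Fin.val_inj, sum_ite_eq', mem_univ, if_true, conj_mul'] at h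
  have hreal : ((∫ θ in (0 : ℝ)..2 * π, ‖trigPolyOfVec v θ‖ ^ 2 : ℝ) : ℂ) =
      ((2 * π * ∑ i, ‖v i‖ ^ 2 : ℝ) : ℂ) := by
    rw [← intervalIntegral.integral_ofReal]; push_cast; exact h
  exact_mod_cast hreal

theorem integral_trigPoly_mul_norm_trigPolyOfVec_sq (n : ℕ) (c : ℤ → ℂ) (v : Fin (n + 1) → ℂ) :
    ∫ θ in (0 : ℝ)..2 * π, trigPoly (Icc (-(n : ℤ)) n) c θ * ‖trigPolyOfVec v θ‖ ^ 2 =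
      2 * π * ∑ i : Fin (n + 1), ∑ j : Fin (n + 1),
        conj (v i) * c (((j : ℕ) : ℤ) - ((i : ℕ) : ℤ)) * v j := by
  simp_rw [trigPoly, sum_mul, fun k => mul_assoc (c k)]
  rw [intervalIntegral.integral_finsetSum fun k _ => by
    apply Continuous.intervalIntegrable; fun_prop]
  simp_rw [intervalIntegral.integral_const_mul, integral_exp_mul_norm_trigPolyOfVec_sq, mul_sum,
    mul_ite, mul_zero]
  rw [sum_comm]
  refine sum_congr rfl fun i _ => ?_
  rw [sum_comm]
  refine sum_congr rfl fun j _ => ?_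
  rw [sum_ite_eq, if_pos]
  · ring
  · have := i.isLt; have := j.isLt
    simp only [mem_Icc]; omega

theorem norm_star_dotProduct_toeplitz_mulVec_le (n : ℕ) (c : ℤ → ℂ)
    {C : Matrix (Fin (n + 1)) (Fin (n + 1)) ℂ}
    (hC : ∀ i j : Fin (n + 1), C i j = c ((j : ℤ) - (i : ℤ)))
    {M : ℝ} (hM : ∀ θ, ‖trigPoly (Icc (-(n : ℤ)) n) c θ‖ ≤ M) (v : Fin (n + 1) → ℂ) :
    ‖star v ⬝ᵥ C *ᵥ v‖ ≤ M * ∑ i, ‖v i‖ ^ 2 := by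
  have hquad : 2 * π * (star v ⬝ᵥ C *ᵥ v) = ∫ θ in (0 : ℝ)..2 * π,
      trigPoly (Icc (-(n : ℤ)) n) c θ * ‖trigPolyOfVec v θ‖ ^ 2 := by
    simp only [integral_trigPoly_mul_norm_trigPolyOfVec_sq, dotProduct, mulVec, hC, mul_sum,
      Pi.star_apply, RCLike.star_def, mul_assoc]
  have h2π : (0 : ℝ) < 2 * π := by positivity
  refine le_of_mul_le_mul_left ?_ h2π
  calc 2 * π * ‖star v ⬝ᵥ C *ᵥ v‖
      = ‖∫ θ in (0 : ℝ)..2 * π,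
          trigPoly (Icc (-(n : ℤ)) n) c θ * ‖trigPolyOfVec v θ‖ ^ 2‖ := by
        rw [← hquad, norm_mul, show (2 * π : ℂ) = ((2 * π : ℝ) : ℂ) by push_cast; rfl,
          norm_real, Real.norm_of_nonneg h2π.le]
    _ ≤ ∫ θ in (0 : ℝ)..2 * π,
          ‖trigPoly (Icc (-(n : ℤ)) n) c θ * ‖trigPolyOfVec v θ‖ ^ 2‖ :=
        intervalIntegral.norm_integral_le_integral_norm h2π.le
    _ ≤ ∫ θ in (0 : ℝ)..2 * π, M * ‖trigPolyOfVec v θ‖ ^ 2 := by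
        refine intervalIntegral.integral_mono_on h2π.le
          (Continuous.intervalIntegrable (by fun_prop) _ _)
          (Continuous.intervalIntegrable (by fun_prop) _ _) fun θ _ => ?_
        rw [norm_mul, norm_pow, norm_real, norm_norm]
        exact mul_le_mul_of_nonneg_right (hM θ) (by positivity)
    _ = 2 * π * (M * ∑ i, ‖v i‖ ^ 2) := by
        rw [intervalIntegral.integral_const_mul, integral_norm_trigPolyOfVec_sq]; ring

theorem norm_le_of_mem_spectrum_toeplitz (n : ℕ) (c : ℤ → ℂ)
    {C : Matrix (Fin (n + 1)) (Fin (n + 1)) ℂ}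
    (hC : ∀ i j : Fin (n + 1), C i j = c ((j : ℤ) - (i : ℤ)))
    {M : ℝ} (hM : ∀ θ, ‖trigPoly (Icc (-(n : ℤ)) n) c θ‖ ≤ M) {μ : ℂ} (hμ : μ ∈ spectrum ℂ C) :
    ‖μ‖ ≤ M := by
  rw [← Matrix.spectrum_toLin', ← Module.End.hasEigenvalue_iff_mem_spectrum] at hμ
  obtain ⟨v, hv⟩ := hμ.exists_hasEigenvector
  have hCv : C *ᵥ v = μ • v := by simpa using hv.apply_eq_smul
  have hnorm : ‖star v ⬝ᵥ v‖ = ∑ i, ‖v i‖ ^ 2 := by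
    simp only [dotProduct, Pi.star_apply, RCLike.star_def, conj_mul']
    norm_cast
    exact Real.norm_of_nonneg (by positivity)
  have hpos : 0 < ∑ i, ‖v i‖ ^ 2 := by
    rw [← hnorm, norm_pos_iff, Ne, dotProduct_star_self_eq_zero]
    exact hv.2
  have h := norm_star_dotProduct_toeplitz_mulVec_le n c hC hM v
  rw [hCv, dotProduct_smul, smul_eq_mul, norm_mul, hnorm] at h
  exact le_of_mul_le_mul_right h hpos

theorem spectralRadius_le_ofReal_of_forall_norm_le {𝕜 A : Type*} [NormedField 𝕜] [Ring A]
    [Algebra 𝕜 A] {a : A} {M : ℝ} (h : ∀ μ ∈ spectrum 𝕜 a, ‖μ‖ ≤ M) :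
    spectralRadius 𝕜 a ≤ ENNReal.ofReal M :=
  iSup₂_le fun μ hμ => by
    rw [← ENNReal.ofReal_coe_nnreal, coe_nnnorm]
    exact ENNReal.ofReal_le_ofReal (h μ hμ)

/-- For an arbitrary Toeplitz matrix `C = (c_{j−i})` with associated Fourier polynomial
`f(λ) = Σ_{k=−n}^{n} c_k e^{ikλ}`, the spectral radius of `C` is at most `2 · sup_λ |f(λ)|`. -/
theorem toeplitz_spectralRadius_bound (n : ℕ) (c : ℤ → ℂ)
    (C : Matrix (Fin (n + 1)) (Fin (n + 1)) ℂ)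
    (hC : ∀ i j : Fin (n + 1), C i j = c ((j : ℤ) - (i : ℤ)))
    (f : ℝ → ℂ)
    (hf : ∀ l : ℝ, f l = ∑ k ∈ Finset.Icc (-(n : ℤ)) (n : ℤ),
      c k * Complex.exp ((k : ℂ) * (l : ℂ) * Complex.I)) :
    (spectralRadius ℂ C).toReal ≤ 2 * ⨆ l : ℝ, ‖f l‖ := by
  have hf' : f = trigPoly (Icc (-(n : ℤ)) n) c := funext hf
  subst hf'
  have hbdd : BddAbove (Set.range fun θ => ‖trigPoly (Icc (-(n : ℤ)) n) c θ‖) :=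
    ⟨_, Set.forall_mem_range.2 (norm_trigPoly_le _ c)⟩
  have hsup_nonneg : 0 ≤ ⨆ θ, ‖trigPoly (Icc (-(n : ℤ)) n) c θ‖ :=
    Real.iSup_nonneg fun _ => norm_nonneg _
  have hρ := spectralRadius_le_ofReal_of_forall_norm_le fun μ hμ =>
    norm_le_of_mem_spectrum_toeplitz n c hC (le_ciSup hbdd) hμ
  linarith [ENNReal.toReal_le_of_le_ofReal hsup_nonneg hρ]
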